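/- arXiv:1802.08856 — 3 statements merged into one kernel-verified Lean document; each statement's English description precedes it below -/
import Mathlib

section
/- Define r_n = ∫_0^1 x^n(1−x)^n/(1+x)^{n+1} dx for natural numbers n. Then for every integer n ≥ 1 the second-order recurrence (n+1)·r_{n+1} − 3(2n+1)·r_n + n·r_{n−1} = 0 holds. -/
/-!
Creative telescoping: with `f_n(x) = xⁿ(1-x)ⁿ/(1+x)ⁿ⁺¹`, the combination
`(n+1) f_{n+1} - 3(2n+1) f_n + n f_{n-1}` is the derivative of
`xⁿ(1-x)ⁿ(1-2x-x²)/(1+x)ⁿ⁺¹`, which vanishes at both ends of `[0, 1]`.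
-/

/-- The classical rational approximations to `log 2`:
`r_n = ∫_0^1 x^n (1−x)^n / (1+x)^{n+1} dx`. -/
noncomputable def rLog2 (n : ℕ) : ℝ := ∫ x in (0:ℝ)..1, x ^ n * (1 - x) ^ n / (1 + x) ^ (n + 1)

open intervalIntegral

noncomputable def rLog2Integrand (n : ℕ) (x : ℝ) : ℝ :=
  x ^ n * (1 - x) ^ n / (1 + x) ^ (n + 1)

noncomputable def rLog2Certificate (n : ℕ) (x : ℝ) : ℝ :=
  x ^ n * (1 - x) ^ n * (1 - 2 * x - x ^ 2) / (1 + x) ^ (n + 1)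

lemma rLog2_eq_integral_integrand (n : ℕ) : rLog2 n = ∫ x in (0:ℝ)..1, rLog2Integrand n x := rfl

lemma intervalIntegrable_rLog2Integrand (n : ℕ) :
    IntervalIntegrable (rLog2Integrand n) MeasureTheory.volume 0 1 := by
  refine ContinuousOn.intervalIntegrable fun x hx => ?_
  rw [Set.uIcc_of_le zero_le_one] at hx
  have : (1 + x) ^ (n + 1) ≠ 0 := by positivity [hx.1]
  unfold rLog2Integrand
  fun_prop (disch := exact this)

lemma hasDerivAt_rLog2Certificate (m : ℕ) {x : ℝ} (hx : 1 + x ≠ 0) :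
    HasDerivAt (rLog2Certificate (m + 1))
      (((m : ℝ) + 2) * rLog2Integrand (m + 2) x - 3 * (2 * (m : ℝ) + 3) * rLog2Integrand (m + 1) x
        + ((m : ℝ) + 1) * rLog2Integrand m x) x := by
  have hx' : HasDerivAt (fun x : ℝ => x) 1 x := hasDerivAt_id x
  have hD := (((hx'.fun_pow (m + 1)).fun_mul ((hx'.const_sub 1).fun_pow (m + 1))).fun_mul
    (((hx'.const_mul 2).const_sub 1).fun_sub (hx'.fun_pow 2))).fun_div
    ((hx'.const_add 1).fun_pow (m + 2)) (pow_ne_zero _ hx)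
  refine hD.congr_deriv ?_
  unfold rLog2Integrand
  field_simp
  push_cast
  ring

lemma rLog2_recurrence (m : ℕ) :
    ((m : ℝ) + 2) * rLog2 (m + 2) - 3 * (2 * (m : ℝ) + 3) * rLog2 (m + 1)
      + ((m : ℝ) + 1) * rLog2 m = 0 := by
  have hint := intervalIntegrable_rLog2Integrand
  have hderiv : ∀ x ∈ Set.uIcc (0:ℝ) 1, HasDerivAt (rLog2Certificate (m + 1))
      (((m : ℝ) + 2) * rLog2Integrand (m + 2) x - 3 * (2 * (m : ℝ) + 3) * rLog2Integrand (m + 1) x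
        + ((m : ℝ) + 1) * rLog2Integrand m x) x := by
    intro x hx
    rw [Set.uIcc_of_le zero_le_one] at hx
    exact hasDerivAt_rLog2Certificate m (by linarith [hx.1])
  have hFTC := integral_eq_sub_of_hasDerivAt hderiv
    ((((hint _).const_mul _).sub ((hint _).const_mul _)).add ((hint _).const_mul _))
  rw [integral_add (((hint _).const_mul _).sub ((hint _).const_mul _)) ((hint _).const_mul _),
    integral_sub ((hint _).const_mul _) ((hint _).const_mul _),
    integral_const_mul, integral_const_mul, integral_const_mul] at hFTC
  simpa [rLog2Certificate, rLog2_eq_integral_integrand] using hFTC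

theorem stmt8 (n : ℕ) (hn : 1 ≤ n) :
    ((n : ℝ) + 1) * rLog2 (n + 1) - 3 * (2 * (n : ℝ) + 1) * rLog2 n + (n : ℝ) * rLog2 (n - 1) = 0 := by
  obtain ⟨m, rfl⟩ := Nat.exists_eq_add_of_le' hn
  have := rLog2_recurrence m
  rw [Nat.add_sub_cancel]
  push_cast
  linarith
end

section
/- Let s ≥ 1 and n ≥ 0 be integers and let real numbers a_{i,k} (1 ≤ i ≤ s, 0 ≤ k ≤ n) be given, and set R(t) = ∑_{i=1}^{s} ∑_{k=0}^{n} a_{i,k}/(t+k)^i. If R(t) = R(−n−t) for every real t not belonging to {0, −1, −2, …, −n}, then a_{i,n−k} = (−1)^i · a_{i,k} for all 1 ≤ i ≤ s and 0 ≤ k ≤ n. -/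
/-!
Subtracting `R(-n-t)` from `R(t)` gives again a sum of partial fractions, with coefficients
`a_{i,k} - (-1)^i a_{i,n-k}`, which vanishes off the poles. Partial fraction coefficients are
unique: multiplying by `(t + k)^m`, with `m` the top order, and letting `t → -k` isolates the
coefficient of `1/(t + k)^m`, so it is zero, and induction on `m` kills the others.
-/

/-- The rational function `R(t) = ∑_{i=1}^s ∑_{k=0}^n a_{i,k}/(t+k)^i`. -/
noncomputable def Rfun (s n : ℕ) (a : ℕ → ℕ → ℝ) (t : ℝ) : ℝ :=
  ∑ i ∈ Finset.Icc 1 s, ∑ k ∈ Finset.range (n + 1), a i k / (t + (k : ℝ)) ^ i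

open Filter Topology Finset

lemma eventually_nhdsNE_forall_ne {X ι : Type*} [TopologicalSpace X] [T1Space X]
    (K : Finset ι) (c : ι → X) (x : X) : ∀ᶠ t in 𝓝[≠] x, ∀ k ∈ K, t ≠ c k := by
  refine (eventually_all_finset K).2 fun k _ => ?_
  by_cases hk : c k = x
  · exact hk ▸ self_mem_nhdsWithin
  · exact nhdsWithin_le_nhds (eventually_ne_nhds (Ne.symm hk))

section PartialFractions

variable {𝕜 ι : Type*} [NontriviallyNormedField 𝕜]

lemma tendsto_sub_pow_mul_div_sub_pow_self (b c : 𝕜) {i s : ℕ} (his : i ≤ s) :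
    Tendsto (fun t => (t - c) ^ s * (b / (t - c) ^ i)) (𝓝[≠] c)
      (𝓝 (if i = s then b else 0)) := by
  have hlim : Tendsto (fun t => b * (t - c) ^ (s - i)) (𝓝[≠] c) (𝓝 (b * (c - c) ^ (s - i))) :=
    (((continuous_sub_right c).pow _).const_mul b).continuousAt.tendsto.mono_left
      nhdsWithin_le_nhds
  have heq : (fun t => b * (t - c) ^ (s - i)) =ᶠ[𝓝[≠] c]
      fun t => (t - c) ^ s * (b / (t - c) ^ i) := by
    filter_upwards [self_mem_nhdsWithin] with t ht
    rw [pow_sub₀ _ (sub_ne_zero.mpr ht) his, div_eq_mul_inv]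
    ring
  convert hlim.congr' heq using 2
  split_ifs with h
  · simp [h]
  · simp [zero_pow (show s - i ≠ 0 by omega)]

lemma tendsto_sub_pow_mul_div_sub_pow_of_ne (b : 𝕜) {c d : 𝕜} (hcd : c ≠ d) {s : ℕ}
    (hs : s ≠ 0) (i : ℕ) : Tendsto (fun t => (t - c) ^ s * (b / (t - d) ^ i)) (𝓝 c) (𝓝 0) := by
  have hcont : ContinuousAt (fun t => (t - c) ^ s * (b / (t - d) ^ i)) c :=
    ((continuous_sub_right c).pow s).continuousAt.mul <| continuousAt_const.div
      ((continuous_sub_right d).pow i).continuousAt (pow_ne_zero _ (sub_ne_zero.mpr hcd))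
  simpa [hs] using hcont.tendsto

lemma tendsto_sub_pow_mul_sum_div_sub_pow {K : Finset ι} {c : ι → 𝕜} (hc : Set.InjOn c K)
    (b : ℕ → ι → 𝕜) {s : ℕ} (hs : s ≠ 0) {k₀ : ι} (hk₀ : k₀ ∈ K) :
    Tendsto (fun t => (t - c k₀) ^ s * ∑ i ∈ Icc 1 s, ∑ k ∈ K, b i k / (t - c k) ^ i)
      (𝓝[≠] c k₀) (𝓝 (b s k₀)) := by
  classical
  have hterm : ∀ i ∈ Icc 1 s, ∀ k ∈ K,
      Tendsto (fun t => (t - c k₀) ^ s * (b i k / (t - c k) ^ i)) (𝓝[≠] c k₀)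
        (𝓝 (if k = k₀ then if i = s then b i k else 0 else 0)) := by
    intro i hi k hk
    by_cases hkk : k = k₀
    · subst hkk
      simpa using tendsto_sub_pow_mul_div_sub_pow_self (b i k) (c k) (mem_Icc.1 hi).2
    · rw [if_neg hkk]
      exact (tendsto_sub_pow_mul_div_sub_pow_of_ne _ (fun h => hkk (hc hk hk₀ h.symm)) hs
        i).mono_left nhdsWithin_le_nhds
  have hsum := tendsto_finsetSum _ fun i hi => tendsto_finsetSum _ fun k hk => hterm i hi k hk
  have hs_mem : s ∈ Icc 1 s := mem_Icc.2 ⟨Nat.one_le_iff_ne_zero.2 hs, le_rfl⟩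
  simp only [sum_ite_eq', hk₀, hs_mem, if_true] at hsum
  simpa only [mul_sum] using hsum

theorem coeff_eq_zero_of_sum_div_sub_pow_eq_zero {K : Finset ι} {c : ι → 𝕜}
    (hc : Set.InjOn c K) (s : ℕ) (b : ℕ → ι → 𝕜)
    (h : ∀ t, (∀ k ∈ K, t ≠ c k) → ∑ i ∈ Icc 1 s, ∑ k ∈ K, b i k / (t - c k) ^ i = 0) :
    ∀ i ∈ Icc 1 s, ∀ k ∈ K, b i k = 0 := by
  induction s with
  | zero => simp
  | succ s ih =>
    have htop : ∀ k ∈ K, b (s + 1) k = 0 := by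
      intro k₀ hk₀
      have hzero : (fun t => (t - c k₀) ^ (s + 1) *
          ∑ i ∈ Icc 1 (s + 1), ∑ k ∈ K, b i k / (t - c k) ^ i) =ᶠ[𝓝[≠] c k₀] fun _ => 0 := by
        filter_upwards [eventually_nhdsNE_forall_ne K c (c k₀)] with t ht
        rw [h t ht, mul_zero]
      exact tendsto_nhds_unique (tendsto_sub_pow_mul_sum_div_sub_pow hc b s.succ_ne_zero hk₀)
        (tendsto_const_nhds.congr' hzero.symm)
    have hlower : ∀ i ∈ Icc 1 s, ∀ k ∈ K, b i k = 0 := by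
      refine ih fun t ht => ?_
      have htop_sum : ∑ k ∈ K, b (s + 1) k / (t - c k) ^ (s + 1) = 0 :=
        sum_eq_zero fun k hk => by rw [htop k hk, zero_div]
      simpa [sum_Icc_succ_top (Nat.le_add_left 1 s), htop_sum] using h t ht
    intro i hi k hk
    rcases eq_or_ne i (s + 1) with rfl | hi'
    · exact htop k hk
    · exact hlower i (by simp only [mem_Icc] at hi ⊢; omega) k hk

end PartialFractions

lemma Rfun_sub (s n : ℕ) (a a' : ℕ → ℕ → ℝ) (t : ℝ) :
    Rfun s n a t - Rfun s n a' t = Rfun s n (a - a') t := by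
  simp only [Rfun, ← sum_sub_distrib, Pi.sub_apply, sub_div]

lemma Rfun_neg_sub (s n : ℕ) (a : ℕ → ℕ → ℝ) (t : ℝ) :
    Rfun s n a (-(n : ℝ) - t) = Rfun s n (fun i k => (-1) ^ i * a i (n - k)) t := by
  refine sum_congr rfl fun i _ => ?_
  rw [← sum_range_reflect]
  refine sum_congr rfl fun k hk => ?_
  have hkn : k ≤ n := Nat.lt_succ_iff.1 (mem_range.1 hk)
  have harg : -(n : ℝ) - t + ((n - k : ℕ) : ℝ) = -(t + k) := by
    rw [Nat.cast_sub hkn]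
    ring
  rw [Nat.add_sub_cancel, harg, neg_pow]
  rcases neg_one_pow_eq_or ℝ i with h | h <;> simp [h, div_neg, neg_div]

theorem stmt12_general (s n : ℕ) (a : ℕ → ℕ → ℝ)
    (hsym : ∀ t : ℝ, (∀ k ∈ Finset.range (n + 1), t + (k : ℝ) ≠ 0) →
      Rfun s n a t = Rfun s n a (-(n : ℝ) - t)) :
    ∀ i ∈ Finset.Icc 1 s, ∀ k ∈ Finset.range (n + 1),
      a i (n - k) = (-1 : ℝ) ^ i * a i k := by
  have hcoeff : ∀ i ∈ Icc 1 s, ∀ k ∈ range (n + 1),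
      (a - fun i k => (-1) ^ i * a i (n - k)) i k = 0 := by
    refine coeff_eq_zero_of_sum_div_sub_pow_eq_zero (c := fun k : ℕ => -(k : ℝ))
      (fun k _ l _ h => by simpa using h) s _ fun t ht => ?_
    have hpoles : ∀ k ∈ range (n + 1), t + (k : ℝ) ≠ 0 := fun k hk h =>
      ht k hk (eq_neg_of_add_eq_zero_left h)
    simp only [sub_neg_eq_add]
    change Rfun s n (a - fun i k => (-1) ^ i * a i (n - k)) t = 0
    rw [← Rfun_sub, ← Rfun_neg_sub, hsym t hpoles, sub_self]
  intro i hi k hk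
  have h := hcoeff i hi (n - k) (mem_range.2 (by omega))
  simp only [Pi.sub_apply] at h
  rw [Nat.sub_sub_self (Nat.lt_succ_iff.1 (mem_range.1 hk))] at h
  exact sub_eq_zero.1 h

theorem stmt12 (s n : ℕ) (hs : 1 ≤ s) (a : ℕ → ℕ → ℝ)
    (hsym : ∀ t : ℝ, (∀ k ∈ Finset.range (n + 1), t + (k : ℝ) ≠ 0) →
      Rfun s n a t = Rfun s n a (-(n : ℝ) - t)) :
    ∀ i ∈ Finset.Icc 1 s, ∀ k ∈ Finset.range (n + 1),
      a i (n - k) = (-1 : ℝ) ^ i * a i k :=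
  stmt12_general s n a hsym
end

section
/- The following two series evaluations hold: ∑_{t=1}^∞ 1/(t−1/2)^4 = π^4/6, and ∑_{t=1}^∞ (128/3)·(t−1)·t·(t+1)·(t+2) / [(t−1/2)^4·(t+1/2)^4·(t+3/2)^4] = (19/6)·π^4 − (125/4)·π^2. -/
/-!
Write `u = t - 1/2`. The summand is a rational function of `u` invariant under `u ↦ -2 - u`, so
its partial fraction decomposition has even-power terms at `u, u + 1, u + 2` and odd-power terms
only in the antisymmetric combinations `u⁻ᵏ - (u + 2)⁻ᵏ`, which telescope. The even-power terms
are shifts of `∑ₙ (n + 1/2)⁻²ᵏ = (2²ᵏ - 1) ζ(2k)`, obtained by removing the even terms from `ζ(2k)`.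
-/

open Real Filter Finset Topology

theorem Antitone.hasSum_sub_add_two {f : ℕ → ℝ} (hf : Antitone f)
    (h0 : Tendsto f atTop (𝓝 0)) : HasSum (fun n => f n - f (n + 2)) (f 0 + f 1) := by
  have hpartial : ∀ N, ∑ n ∈ range N, (f n - f (n + 2)) = f 0 + f 1 - (f N + f (N + 1)) := by
    intro N
    induction N with
    | zero => simp
    | succ N ih => rw [sum_range_succ, ih]; ring
  rw [hasSum_iff_tendsto_nat_of_nonneg (fun n => sub_nonneg.2 (hf (by omega)))]
  simp only [hpartial]
  simpa using tendsto_const_nhds.sub (h0.add (h0.comp (tendsto_add_atTop_nat 1)))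

theorem div_eq_partialFractions {K : Type*} [Field K] [CharZero K] {x : K}
    (h0 : x ≠ 0) (h1 : x + 1 ≠ 0) (h2 : x + 2 ≠ 0) :
    128 / 3 * (x - 1 / 2) * (x + 1 / 2) * (x + 3 / 2) * (x + 5 / 2) /
        (x ^ 4 * (x + 1) ^ 4 * (x + 2) ^ 4) =
      -5 / 2 * (1 / x ^ 4) + 24 * (1 / (x + 1) ^ 4) - 5 / 2 * (1 / (x + 2) ^ 4)
        - 311 / 12 * (1 / x ^ 2) - 32 / 3 * (1 / (x + 1) ^ 2) - 311 / 12 * (1 / (x + 2) ^ 2)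
        + 37 / 3 * (1 / x ^ 3 - 1 / (x + 2) ^ 3) + 125 / 4 * (1 / x ^ 1 - 1 / (x + 2) ^ 1) := by
  field_simp
  ring

noncomputable def recipPowAddHalf (k n : ℕ) : ℝ := 1 / ((n : ℝ) + 1 / 2) ^ k

theorem antitone_recipPowAddHalf (k : ℕ) : Antitone (recipPowAddHalf k) := fun _ _ hab =>
  one_div_le_one_div_of_le (by positivity) (pow_le_pow_left₀ (by positivity) (by simpa) k)

theorem tendsto_recipPowAddHalf {k : ℕ} (hk : k ≠ 0) :
    Tendsto (recipPowAddHalf k) atTop (𝓝 0) := by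
  have h : Tendsto (fun n : ℕ => ((n : ℝ) + 1 / 2) ^ k) atTop atTop :=
    (tendsto_pow_atTop hk).comp (tendsto_atTop_add_const_right _ _ tendsto_natCast_atTop_atTop)
  exact h.inv_tendsto_atTop.congr fun n => (one_div _).symm

theorem hasSum_recipPowAddHalf_sub_add_two {k : ℕ} (hk : k ≠ 0) :
    HasSum (fun n => recipPowAddHalf k n - recipPowAddHalf k (n + 2)) (2 ^ k + (2 / 3) ^ k) := by
  convert (antitone_recipPowAddHalf k).hasSum_sub_add_two (tendsto_recipPowAddHalf hk) using 1
  norm_num [recipPowAddHalf, ← inv_pow]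

theorem hasSum_recipPowAddHalf {k : ℕ} {z : ℝ} (hz : HasSum (fun n : ℕ => 1 / (n : ℝ) ^ k) z) :
    HasSum (recipPowAddHalf k) ((2 ^ k - 1) * z) := by
  have heven : HasSum (fun n : ℕ => 1 / ((2 * n : ℕ) : ℝ) ^ k) (z / 2 ^ k) :=
    (hz.div_const (2 ^ k)).congr_fun fun n => by push_cast; rw [mul_pow, div_div, mul_comm]
  have hs : Summable (fun n : ℕ => 1 / ((2 * n + 1 : ℕ) : ℝ) ^ k) :=
    hz.summable.comp_injective (i := fun n => 2 * n + 1) fun a b h => by simp_all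
  have hodd : HasSum (fun n : ℕ => 1 / ((2 * n + 1 : ℕ) : ℝ) ^ k) (z - z / 2 ^ k) :=
    eq_sub_of_add_eq' (hz.unique (heven.even_add_odd hs.hasSum)).symm ▸ hs.hasSum
  rw [show (2 ^ k - 1) * z = 2 ^ k * (z - z / 2 ^ k) by field_simp]
  refine (hodd.mul_left (2 ^ k)).congr_fun fun n => ?_
  rw [recipPowAddHalf, show ((2 * n + 1 : ℕ) : ℝ) = 2 * ((n : ℝ) + 1 / 2) by push_cast; ring,
    mul_pow]
  field_simp

theorem summand_eq_recipPowAddHalf (n : ℕ) :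
    (128 / 3 : ℝ) * (((n : ℝ) + 1) - 1) * ((n : ℝ) + 1) * (((n : ℝ) + 1) + 1) *
          (((n : ℝ) + 1) + 2) /
        ((((n : ℝ) + 1) - 1 / 2) ^ 4 * (((n : ℝ) + 1) + 1 / 2) ^ 4 *
          (((n : ℝ) + 1) + 3 / 2) ^ 4) =
      -5 / 2 * recipPowAddHalf 4 n + 24 * recipPowAddHalf 4 (n + 1)
        - 5 / 2 * recipPowAddHalf 4 (n + 2) - 311 / 12 * recipPowAddHalf 2 n
        - 32 / 3 * recipPowAddHalf 2 (n + 1) - 311 / 12 * recipPowAddHalf 2 (n + 2)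
        + 37 / 3 * (recipPowAddHalf 3 n - recipPowAddHalf 3 (n + 2))
        + 125 / 4 * (recipPowAddHalf 1 n - recipPowAddHalf 1 (n + 2)) := by
  have h := div_eq_partialFractions (x := (n : ℝ) + 1 / 2) (by positivity) (by positivity)
    (by positivity)
  simp only [recipPowAddHalf]
  push_cast
  convert h using 2 <;> ring

theorem stmt15 :
    (∑' t : ℕ, 1 / (((t : ℝ) + 1) - 1 / 2) ^ 4) = Real.pi ^ 4 / 6 ∧
    (∑' t : ℕ,
        (128 / 3 : ℝ) * (((t : ℝ) + 1) - 1) * ((t : ℝ) + 1) * (((t : ℝ) + 1) + 1) *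
            (((t : ℝ) + 1) + 2) /
          ((((t : ℝ) + 1) - 1 / 2) ^ 4 * (((t : ℝ) + 1) + 1 / 2) ^ 4 *
            (((t : ℝ) + 1) + 3 / 2) ^ 4)) =
      (19 / 6 : ℝ) * Real.pi ^ 4 - (125 / 4 : ℝ) * Real.pi ^ 2 := by
  have h4 : HasSum (recipPowAddHalf 4) (π ^ 4 / 6) := by
    convert hasSum_recipPowAddHalf hasSum_zeta_four using 1; ring
  have h2 : HasSum (recipPowAddHalf 2) (π ^ 2 / 2) := by
    convert hasSum_recipPowAddHalf hasSum_zeta_two using 1; ring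
  have hshift {k : ℕ} {z : ℝ} (h : HasSum (recipPowAddHalf k) z) (m : ℕ) :
      HasSum (fun n => recipPowAddHalf k (n + m)) (z - ∑ i ∈ range m, recipPowAddHalf k i) :=
    (hasSum_nat_add_iff' m).2 h
  constructor
  · exact (h4.congr_fun fun n => by rw [recipPowAddHalf]; ring).tsum_eq
  · have hsum := ((((((((h4.mul_left (-5 / 2)).add ((hshift h4 1).mul_left 24)).sub
      ((hshift h4 2).mul_left (5 / 2))).sub (h2.mul_left (311 / 12))).sub
      ((hshift h2 1).mul_left (32 / 3))).sub ((hshift h2 2).mul_left (311 / 12))).add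
      ((hasSum_recipPowAddHalf_sub_add_two (k := 3) (by norm_num)).mul_left (37 / 3))).add
      ((hasSum_recipPowAddHalf_sub_add_two (k := 1) (by norm_num)).mul_left (125 / 4)))
    convert (hsum.congr_fun summand_eq_recipPowAddHalf).tsum_eq using 1
    norm_num [sum_range_succ, recipPowAddHalf]
    ring
end
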